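/- Let P be a finite bounded poset with |P| > 1 and b the blocker map on Ant(P). For each blocker B ∈ Antb(P), the greatest element of the preimage b⁻¹(B) (with respect to the order on Ant(P)) is b(B). -/

import Mathlib

open scoped Classical
open Set

/-- The order filter generated by a subset. -/
def upFilter (P : Type*) [Preorder P] (S : Set P) : Set P := {x | ∃ s ∈ S, s ≤ x}

/-- The set of minimal elements of a subset. -/
def minsOf (P : Type*) [Preorder P] (S : Set P) : Set P := {x | Minimal (· ∈ S) x}

/-- The set of intersecters for `A` in `P`. -/
def inters (P : Type*) [PartialOrder P] [OrderBot P] (A : Set P) : Set P :=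
  if A = ∅ then Set.univ
  else if A = {(⊥ : P)} then ∅
  else {b | ∀ a ∈ A, a ≠ ⊥ → ∃ z : P, IsAtom z ∧ z ≤ b ∧ z ≤ a}

/-- The set of complementers for `A` in `P`. -/
def compls (P : Type*) [PartialOrder P] [OrderBot P] (A : Set P) : Set P := (inters P A)ᶜ

/-- The blocker map: the set of minimal intersecters for `A` in `P`. -/
def bmap (P : Type*) [PartialOrder P] [OrderBot P] (A : Set P) : Set P := minsOf P (inters P A)

/-! Away from the degenerate antichains `∅` and `{⊥}` (which `b` swaps), `inters` is the polar
`J = atomInters` of the symmetric relation "some atom lies below both" on non-bottom elements, so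
`A ⊆ J (J A)` and `J (J (J A)) = J A`. As `J A` is an upper set of a well-founded poset, it is the
filter generated by its minimal elements `b A`, and `J (b A) = J (J A)`. Hence `b (b (b A)) = b A`,
and the filter generated by an antichain `A` lies in `J (J A)`, which is generated by `b (b A)`. -/

def atomInters (P : Type*) [PartialOrder P] [OrderBot P] (A : Set P) : Set P :=
  {b | ∀ a ∈ A, a ≠ ⊥ → ∃ z : P, IsAtom z ∧ z ≤ b ∧ z ≤ a}

section AtomInters

variable {P : Type*} [PartialOrder P] [OrderBot P] {A : Set P}

lemma inters_eq_atomInters (h : A ≠ {⊥}) : inters P A = atomInters P A := by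
  unfold inters
  split_ifs with h0
  · subst h0
    ext x
    simp [atomInters]
  · rfl

lemma isUpperSet_atomInters (A : Set P) : IsUpperSet (atomInters P A) := by
  intro b c hbc hb a ha ha0
  obtain ⟨z, hz, hzb, hza⟩ := hb a ha ha0
  exact ⟨z, hz, hzb.trans hbc, hza⟩

lemma mem_atomInters_atomInters {x : P} (hx : x ∈ A) (hx0 : x ≠ ⊥) :
    x ∈ atomInters P (atomInters P A) := by
  intro d hd _
  obtain ⟨z, hz, hzd, hzx⟩ := hd x hx hx0
  exact ⟨z, hz, hzx, hzd⟩

lemma bot_notMem_atomInters (h : ∃ a ∈ A, a ≠ ⊥) : (⊥ : P) ∉ atomInters P A := by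
  obtain ⟨a, ha, ha0⟩ := h
  intro hbot
  obtain ⟨z, hz, hzb, -⟩ := hbot a ha ha0
  exact hz.1 (le_bot_iff.mp hzb)

lemma atomInters_atomInters_atomInters (h : ∃ a ∈ A, a ≠ ⊥) :
    atomInters P (atomInters P (atomInters P A)) = atomInters P A := by
  ext x
  refine ⟨fun hx a ha ha0 => hx a (mem_atomInters_atomInters ha ha0) ha0, fun hx => ?_⟩
  exact mem_atomInters_atomInters hx (ne_of_mem_of_not_mem hx (bot_notMem_atomInters h))

lemma top_mem_atomInters [OrderTop P] [IsAtomic P] (A : Set P) : (⊤ : P) ∈ atomInters P A := by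
  intro a _ ha0
  obtain ⟨z, hz, hza⟩ := (eq_bot_or_exists_atom_le a).resolve_left ha0
  exact ⟨z, hz, le_top, hza⟩

end AtomInters

section MinsOf

variable {P : Type*} [PartialOrder P] {S : Set P}

lemma isAntichain_minsOf (S : Set P) : IsAntichain (· ≤ ·) (minsOf P S) :=
  fun _ ha _ hb hne hle => hne (le_antisymm hle (hb.2 ha.1 hle))

variable [WellFoundedLT P]

lemma exists_mem_minsOf_le {t : P} (ht : t ∈ S) : ∃ m ∈ minsOf P S, m ≤ t := by
  obtain ⟨m, hmt, hm⟩ := exists_minimal_le_of_wellFoundedLT (· ∈ S) t ht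
  exact ⟨m, hm, hmt⟩

lemma upFilter_minsOf (hS : IsUpperSet S) : upFilter P (minsOf P S) = S := by
  ext x
  refine ⟨fun ⟨m, hm, hmx⟩ => hS hmx hm.1, fun hx => exists_mem_minsOf_le hx⟩

lemma atomInters_minsOf [OrderBot P] (hS : (⊥ : P) ∉ S) :
    atomInters P (minsOf P S) = atomInters P S := by
  ext c
  refine ⟨fun hc t ht ht0 => ?_, fun hc m hm hm0 => hc m hm.1 hm0⟩
  obtain ⟨m, hm, hmt⟩ := exists_mem_minsOf_le ht
  obtain ⟨z, hz, hzc, hzm⟩ := hc m hm (ne_of_mem_of_not_mem hm.1 hS)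
  exact ⟨z, hz, hzc, hzm.trans hmt⟩

end MinsOf

lemma IsAntichain.eq_singleton_bot {P : Type*} [PartialOrder P] [OrderBot P] {A : Set P}
    (hA : IsAntichain (· ≤ ·) A) (hA0 : ⊥ ∈ A) : A = {⊥} :=
  subset_antisymm (fun _ ha => by_contra fun ha0 => hA hA0 ha (Ne.symm ha0) bot_le)
    (singleton_subset_iff.mpr hA0)

section Blocker

variable {P : Type*} [PartialOrder P] [OrderBot P]

lemma bmap_empty : bmap P (∅ : Set P) = {⊥} := by
  ext x
  simp [bmap, inters, minsOf]

lemma bmap_singleton_bot : bmap P ({⊥} : Set P) = ∅ := by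
  ext x
  simp [bmap, inters, minsOf, Minimal]

lemma bmap_eq_minsOf_atomInters {A : Set P} (h : ∃ a ∈ A, a ≠ ⊥) :
    bmap P A = minsOf P (atomInters P A) := by
  obtain ⟨a, ha, ha0⟩ := h
  rw [bmap, inters_eq_atomInters]
  rintro rfl
  exact ha0 ha

variable [WellFoundedLT P] {A : Set P}

lemma exists_mem_bmap_ne_bot [OrderTop P] (h : ∃ a ∈ A, a ≠ ⊥) :
    ∃ b ∈ bmap P A, b ≠ ⊥ := by
  obtain ⟨m, hm, -⟩ := exists_mem_minsOf_le (top_mem_atomInters (P := P) A)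
  rw [bmap_eq_minsOf_atomInters h]
  exact ⟨m, hm, ne_of_mem_of_not_mem hm.1 (bot_notMem_atomInters h)⟩

lemma atomInters_bmap (h : ∃ a ∈ A, a ≠ ⊥) :
    atomInters P (bmap P A) = atomInters P (atomInters P A) := by
  rw [bmap_eq_minsOf_atomInters h, atomInters_minsOf (bot_notMem_atomInters h)]

lemma upFilter_bmap (h : ∃ a ∈ A, a ≠ ⊥) : upFilter P (bmap P A) = atomInters P A := by
  rw [bmap_eq_minsOf_atomInters h, upFilter_minsOf (isUpperSet_atomInters A)]

lemma bmap_bmap_bmap [OrderTop P] (A : Set P) : bmap P (bmap P (bmap P A)) = bmap P A := by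
  by_cases h : ∃ a ∈ A, a ≠ ⊥
  · have h' := exists_mem_bmap_ne_bot h
    rw [bmap_eq_minsOf_atomInters (exists_mem_bmap_ne_bot h'), atomInters_bmap h',
      atomInters_bmap h, atomInters_atomInters_atomInters h, bmap_eq_minsOf_atomInters h]
  · push Not at h
    rcases subset_singleton_iff_eq.mp h with rfl | rfl <;>
      simp only [bmap_empty, bmap_singleton_bot]

lemma upFilter_subset_upFilter_bmap_bmap [OrderTop P] (hA : IsAntichain (· ≤ ·) A) :
    upFilter P A ⊆ upFilter P (bmap P (bmap P A)) := by
  by_cases hA0 : (⊥ : P) ∈ A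
  · rw [hA.eq_singleton_bot hA0, bmap_singleton_bot, bmap_empty]
  rintro x ⟨a, ha, hax⟩
  have h : ∃ a ∈ A, a ≠ ⊥ := ⟨a, ha, ne_of_mem_of_not_mem ha hA0⟩
  rw [upFilter_bmap (exists_mem_bmap_ne_bot h), atomInters_bmap h]
  exact isUpperSet_atomInters _ hax (mem_atomInters_atomInters ha (ne_of_mem_of_not_mem ha hA0))

end Blocker

theorem stmt_15_general {P : Type*} [PartialOrder P] [BoundedOrder P] [Fintype P]
    (B : Set P) (hB : ∃ A : Set P, IsAntichain (· ≤ ·) A ∧ bmap P A = B) :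
    IsAntichain (· ≤ ·) (bmap P B) ∧ bmap P (bmap P B) = B ∧
    ∀ A : Set P, IsAntichain (· ≤ ·) A → bmap P A = B →
      upFilter P A ⊆ upFilter P (bmap P B) := by
  obtain ⟨A, -, rfl⟩ := hB
  refine ⟨isAntichain_minsOf _, bmap_bmap_bmap A, fun A' hA' hA'B => ?_⟩
  rw [← hA'B]
  exact upFilter_subset_upFilter_bmap_bmap hA'

theorem stmt_15 {P : Type*} [PartialOrder P] [BoundedOrder P] [Fintype P] [Nontrivial P]
    (B : Set P) (hB : ∃ A : Set P, IsAntichain (· ≤ ·) A ∧ bmap P A = B) :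
    IsAntichain (· ≤ ·) (bmap P B) ∧ bmap P (bmap P B) = B ∧
    ∀ A : Set P, IsAntichain (· ≤ ·) A → bmap P A = B →
      upFilter P A ⊆ upFilter P (bmap P B) :=
  stmt_15_general B hB
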